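/- Let (P, x_L, x_R) be a finite oriented poset with weight function w into a commutative ring R, and let S be the set of lower sets I of P satisfying (x_R ∈ I implies x_L ∈ I). Then loop_t(M_w(P↘)) = [[Σ_{I ∈ S} w(I), −Σ_{I ∈ S, x_L ∈ I} w(I)], [Σ_{I ∈ S, x_L ∉ I} w(I), 0]]. In other words, loop_t applied to the down weight matrix of (P, x_L, x_R) equals the down weight matrix of the target-looped oriented poset ◁(P↘), obtained by adding the relation x_L ≤ x_R to P and taking both distinguished vertices to be x_L. -/
import Mathlib


open Classical Relation

noncomputable section

variable {R : Type*} [CommRing R]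

/-- A finite set `I` is a lower set (order ideal) for the relation `r`. -/
def IsLowerSetRel {α : Type*} (r : α → α → Prop) (I : Finset α) : Prop :=
  ∀ x ∈ I, ∀ y, r y x → y ∈ I

/-- The sum of the weights `∏ i ∈ I, w i` over all lower sets `I` of the relation `r`
satisfying the condition `C`.  Taking `C = fun _ => True` gives the weight polynomial. -/
def wSum {α : Type*} [Fintype α] (r : α → α → Prop) (w : α → R) (C : Finset α → Prop) : R :=
  ∑ I ∈ Finset.univ.filter (fun I : Finset α => IsLowerSetRel r I ∧ C I), ∏ i ∈ I, w i

/-- The down weight matrix `M_w(P↘)` of an oriented poset `(P, xL, xR)`. -/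
def downMat {α : Type*} [Fintype α] (r : α → α → Prop) (w : α → R) (xL xR : α) :
    Matrix (Fin 2) (Fin 2) R :=
  !![wSum r w (fun _ => True), -wSum r w (fun I => xR ∈ I);
     wSum r w (fun I => xL ∉ I), -wSum r w (fun I => xR ∈ I ∧ xL ∉ I)]

/-- The up weight matrix `M_w(P↗)` of an oriented poset `(P, xL, xR)`. -/
def upMat {α : Type*} [Fintype α] (r : α → α → Prop) (w : α → R) (xL xR : α) :
    Matrix (Fin 2) (Fin 2) R :=
  !![wSum r w (fun I => xR ∈ I), wSum r w (fun I => xR ∉ I);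
     wSum r w (fun I => xR ∈ I ∧ xL ∉ I), wSum r w (fun I => xR ∉ I ∧ xL ∉ I)]

/-- The order relation of the glued poset `P↘Q` on the disjoint union `P ⊔ Q`:
elements of `P` (resp. `Q`) compare as in `P` (resp. `Q`), an element `a ∈ Q` lies below
`b ∈ P` iff `a ≤ yL` in `Q` and `xR ≤ b` in `P`, and no element of `P` lies below an
element of `Q`. -/
def glueDown {α β : Type*} (rP : α → α → Prop) (rQ : β → β → Prop) (xR : α) (yL : β) :
    α ⊕ β → α ⊕ β → Prop
  | .inl a, .inl b => rP a b
  | .inr a, .inr b => rQ a b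
  | .inr a, .inl b => rQ a yL ∧ rP xR b
  | .inl _, .inr _ => False

/-- The order relation of the glued poset `P↗Q` on the disjoint union `P ⊔ Q`:
elements of `P` (resp. `Q`) compare as in `P` (resp. `Q`), an element `a ∈ P` lies below
`b ∈ Q` iff `a ≤ xR` in `P` and `yL ≤ b` in `Q`, and no element of `Q` lies below an
element of `P`. -/
def glueUp {α β : Type*} (rP : α → α → Prop) (rQ : β → β → Prop) (xR : α) (yL : β) :
    α ⊕ β → α ⊕ β → Prop
  | .inl a, .inl b => rP a b
  | .inr a, .inr b => rQ a b
  | .inl a, .inr b => rP a xR ∧ rQ yL b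
  | .inr _, .inl _ => False
/-- `loop_t` on 2×2 matrices: `[[a,b],[c,d]] ↦ [[a+d, c−a],[c+d, 0]]`. -/
def loopTM (M : Matrix (Fin 2) (Fin 2) R) : Matrix (Fin 2) (Fin 2) R :=
  !![M 0 0 + M 1 1, M 1 0 - M 0 0; M 1 0 + M 1 1, 0]


lemma wSum_eq {α : Type*} [Fintype α] (r : α → α → Prop) (w : α → R) (C : Finset α → Prop) :
    wSum r w C = ∑ I : Finset α, if IsLowerSetRel r I ∧ C I then ∏ i ∈ I, w i else 0 :=
  Finset.sum_filter _ _

lemma wSum_congr {α : Type*} [Fintype α] (r : α → α → Prop) (w : α → R)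
    {C D : Finset α → Prop} (h : ∀ I, IsLowerSetRel r I → (C I ↔ D I)) :
    wSum r w C = wSum r w D := by
  rw [wSum_eq, wSum_eq]
  apply Finset.sum_congr rfl
  intro I _
  by_cases hl : IsLowerSetRel r I
  · by_cases hc : C I
    · rw [if_pos ⟨hl, hc⟩, if_pos ⟨hl, (h I hl).1 hc⟩]
    · rw [if_neg (fun hh => hc hh.2), if_neg (fun hh => hc ((h I hl).2 hh.2))]
  · rw [if_neg (fun hh => hl hh.1), if_neg (fun hh => hl hh.1)]

lemma wSum_split {α : Type*} [Fintype α] (r : α → α → Prop) (w : α → R)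
    (C D : Finset α → Prop) :
    wSum r w (fun I => C I ∧ D I) + wSum r w (fun I => C I ∧ ¬ D I) = wSum r w C := by
  rw [wSum_eq, wSum_eq, wSum_eq, ← Finset.sum_add_distrib]
  apply Finset.sum_congr rfl
  intro I _
  by_cases hl : IsLowerSetRel r I <;> by_cases hc : C I <;> by_cases hd : D I <;>
    simp [hl, hc, hd]

lemma lower_rtg {α : Type*} [PartialOrder α] (xL xR : α) (I : Finset α) :
    IsLowerSetRel (ReflTransGen (fun a b : α => a ≤ b ∨ (a = xL ∧ b = xR))) I ↔
      IsLowerSetRel (· ≤ ·) I ∧ (xR ∈ I → xL ∈ I) := by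
  constructor
  · intro h
    refine ⟨fun x hx y hy => h x hx y (ReflTransGen.single (Or.inl hy)),
      fun hR => h xR hR xL (ReflTransGen.single (Or.inr ⟨rfl, rfl⟩))⟩
  · rintro ⟨hlow, himp⟩ x hx y hy
    revert hx
    induction hy with
    | refl => exact id
    | tail _ hbc ih =>
        intro hc
        apply ih
        rcases hbc with h | ⟨rfl, rfl⟩
        · exact hlow _ hc _ h
        · exact himp hc

lemma wSum_rtg {α : Type*} [Fintype α] [PartialOrder α] (w : α → R) (xL xR : α)
    (C : Finset α → Prop) :
    wSum (ReflTransGen (fun a b : α => a ≤ b ∨ (a = xL ∧ b = xR))) w C =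
      wSum (· ≤ ·) w (fun I => (xR ∈ I → xL ∈ I) ∧ C I) := by
  rw [wSum_eq, wSum_eq]
  apply Finset.sum_congr rfl
  intro I _
  have := lower_rtg xL xR I
  by_cases h : IsLowerSetRel (ReflTransGen (fun a b : α => a ≤ b ∨ (a = xL ∧ b = xR))) I ∧ C I
  · rw [if_pos h, if_pos ⟨(this.1 h.1).1, (this.1 h.1).2, h.2⟩]
  · rw [if_neg h, if_neg (fun hh => h ⟨this.2 ⟨hh.1, hh.2.1⟩, hh.2.2⟩)]

/-- `loop_t(M_w(P↘))` is the matrix of sums over lower sets `I` with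
`xR ∈ I → xL ∈ I`; that is, the down weight matrix of the target-looped oriented poset
`◁(P↘)`, obtained by adding the relation `xL ≤ xR` and taking both vertices to be `xL`. -/
theorem loopTM_downMat {α : Type*} [Fintype α] [PartialOrder α] (w : α → R) (xL xR : α) :
    loopTM (downMat (· ≤ ·) w xL xR) =
      !![wSum (· ≤ ·) w (fun I => xR ∈ I → xL ∈ I),
         -wSum (· ≤ ·) w (fun I => (xR ∈ I → xL ∈ I) ∧ xL ∈ I);
         wSum (· ≤ ·) w (fun I => (xR ∈ I → xL ∈ I) ∧ xL ∉ I), 0] ∧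
    loopTM (downMat (· ≤ ·) w xL xR) =
      downMat (ReflTransGen (fun a b : α => a ≤ b ∨ (a = xL ∧ b = xR))) w xL xL := by
  have hs1 := wSum_split (α := α) (· ≤ ·) w (fun _ => True) (fun I => xR ∈ I ∧ xL ∉ I)
  have ha : wSum (α := α) (· ≤ ·) w (fun I => True ∧ (xR ∈ I ∧ xL ∉ I)) =
      wSum (· ≤ ·) w (fun I => xR ∈ I ∧ xL ∉ I) := wSum_congr _ _ (fun I _ => by tauto)
  have hb : wSum (α := α) (· ≤ ·) w (fun I => True ∧ ¬(xR ∈ I ∧ xL ∉ I)) =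
      wSum (· ≤ ·) w (fun I => xR ∈ I → xL ∈ I) := wSum_congr _ _ (fun I _ => by tauto)
  have hs2 := wSum_split (α := α) (· ≤ ·) w (fun _ => True) (fun I => xL ∈ I)
  have hc : wSum (α := α) (· ≤ ·) w (fun I => True ∧ xL ∈ I) =
      wSum (· ≤ ·) w (fun I => (xR ∈ I → xL ∈ I) ∧ xL ∈ I) := wSum_congr _ _ (fun I _ => by tauto)
  have hd : wSum (α := α) (· ≤ ·) w (fun I => True ∧ ¬ xL ∈ I) =
      wSum (· ≤ ·) w (fun I => xL ∉ I) := wSum_congr _ _ (fun I _ => by tauto)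
  have hs3 := wSum_split (α := α) (· ≤ ·) w (fun I => xL ∉ I) (fun I => xR ∈ I)
  have he : wSum (α := α) (· ≤ ·) w (fun I => xL ∉ I ∧ xR ∈ I) =
      wSum (· ≤ ·) w (fun I => xR ∈ I ∧ xL ∉ I) := wSum_congr _ _ (fun I _ => by tauto)
  have hf : wSum (α := α) (· ≤ ·) w (fun I => xL ∉ I ∧ ¬ xR ∈ I) =
      wSum (· ≤ ·) w (fun I => (xR ∈ I → xL ∈ I) ∧ xL ∉ I) := wSum_congr _ _ (fun I _ => by tauto)
  have hz : wSum (α := α) (· ≤ ·) w (fun I => (xR ∈ I → xL ∈ I) ∧ (xL ∈ I ∧ xL ∉ I)) = 0 := by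
    rw [wSum_eq]
    apply Finset.sum_eq_zero
    intro I _
    rw [if_neg (by tauto)]
  have hT : wSum (α := α) (· ≤ ·) w (fun I => (xR ∈ I → xL ∈ I) ∧ True) =
      wSum (· ≤ ·) w (fun I => xR ∈ I → xL ∈ I) := wSum_congr _ _ (fun I _ => by tauto)
  have hF : wSum (α := α) (· ≤ ·) w (fun _ => False) = 0 := by
    rw [wSum_eq]
    apply Finset.sum_eq_zero
    intro I _
    rw [if_neg (by tauto)]
  constructor <;>
  · ext i j
    fin_cases i <;> fin_cases j <;>
      simp [loopTM, downMat, wSum_rtg, hT, hz, hF] <;>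
      first
        | rfl
        | linear_combination ha + hb - hs1
        | linear_combination hs2 - hc - hd
        | linear_combination hs3 - he - hf
        | linear_combination hs3 - he - hf - hF
        | linear_combination he + hf - hs3
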